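/- arXiv:2409.12631 — 4 statements merged into one kernel-verified Lean document; each statement's English description precedes it below -/
import Mathlib

section
/- Let f : ℝ → ℝ be locally integrable, even, and nonincreasing on (0,∞). Then for every x > 0 and every y < −x one has (1/(x−y)) ∫_y^x f ≤ (1/(2x)) ∫_{−x}^x f; consequently, for every x > 0, M f(x) = sup_{y ≥ −x, y ≠ x, y < x} (1/(x−y)) ∫_y^x f. -/
open MeasureTheory Set Filter
open scoped ENNReal Topology

/-- Uncentered Hardy–Littlewood maximal function (without absolute values):
`M f x = sup_{a < x < b} (1/(b-a)) ∫_a^b f`. -/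
noncomputable def maxFn (f : ℝ → ℝ) (x : ℝ) : ℝ :=
  sSup {z : ℝ | ∃ a b : ℝ, a < x ∧ x < b ∧ z = (b - a)⁻¹ * ∫ y in a..b, f y}

/-- The variation of `g` on an open set `U`:
`var_U(g) = sup { -∫_U g φ' : φ ∈ C¹_c(U), |φ| ≤ 1 }`, valued in `ℝ≥0∞`. -/
noncomputable def evar (U : Set ℝ) (g : ℝ → ℝ) : ℝ≥0∞ :=
  ⨆ (φ : ℝ → ℝ) (_ : ContDiff ℝ 1 φ ∧ HasCompactSupport φ ∧ tsupport φ ⊆ U ∧ ∀ x, |φ x| ≤ 1),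
    ENNReal.ofReal (-∫ x in U, g x * deriv φ x)

/-- `g` is the weak derivative of `f` on `ℝ`. -/
def HasWeakDeriv (f g : ℝ → ℝ) : Prop :=
  LocallyIntegrable f volume ∧ LocallyIntegrable g volume ∧
    ∀ φ : ℝ → ℝ, ContDiff ℝ 1 φ → HasCompactSupport φ →
      ∫ x, f x * deriv φ x = -∫ x, g x * φ x

section aux

variable (f : ℝ → ℝ)

/-- interval integrability from local integrability -/
lemma aux_intInt (hloc : LocallyIntegrable f volume) :
    ∀ a b : ℝ, IntervalIntegrable f volume a b := fun a b =>
  ⟨(hloc.integrableOn_isCompact isCompact_Icc).mono_set Set.Ioc_subset_Icc_self,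
   (hloc.integrableOn_isCompact isCompact_Icc).mono_set Set.Ioc_subset_Icc_self⟩

/-- `2x f(x) ≤ ∫_{-x}^x f` -/
lemma aux_fx_le (hloc : LocallyIntegrable f volume)
    (heven : ∀ x : ℝ, f (-x) = f x) (hmono : AntitoneOn f (Set.Ioi 0))
    {x : ℝ} (hx : 0 < x) : 2 * x * f x ≤ ∫ t in (-x)..x, f t := by
  have hint := aux_intInt f hloc
  have h := intervalIntegral.integral_mono_ae_restrict (f := fun _ => f x) (g := f)
    (by linarith : -x ≤ x) (intervalIntegrable_const) (hint _ _) ?_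
  · rw [intervalIntegral.integral_const] at h
    have : (x - -x) • f x = 2 * x * f x := by rw [smul_eq_mul]; ring
    linarith [this ▸ h]
  · have h0 : (volume.restrict (Icc (-x) x)) {(0:ℝ)} = 0 := by
      simp [Measure.restrict_apply]
    filter_upwards [ae_restrict_mem measurableSet_Icc,
      (measure_eq_zero_iff_ae_notMem.mp h0 : ∀ᵐ t ∂_, t ∉ ({0} : Set ℝ))] with t ht ht0
    simp only [Set.mem_singleton_iff] at ht0
    rcases lt_or_gt_of_ne ht0 with h | h
    · have : f t = f (-t) := by rw [← heven t]
      rw [this]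
      exact hmono (by simpa using h) (by exact hx) (by linarith [ht.1])
    · exact hmono h hx ht.2

/-- Part 1 inequality. -/
lemma aux_part1 (hloc : LocallyIntegrable f volume)
    (heven : ∀ x : ℝ, f (-x) = f x) (hmono : AntitoneOn f (Set.Ioi 0))
    {x : ℝ} (hx : 0 < x) {y : ℝ} (hy : y < -x) :
    (x - y)⁻¹ * ∫ t in y..x, f t ≤ (2 * x)⁻¹ * ∫ t in (-x)..x, f t := by
  have hint := aux_intInt f hloc
  set A := ∫ t in (-x)..x, f t with hA
  have hfx : 2 * x * f x ≤ A := aux_fx_le f hloc heven hmono hx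
  have h1 : ∫ t in y..(-x), f t ≤ (-x - y) * f x := by
    have := intervalIntegral.integral_mono_on (f := f) (g := fun _ => f x)
      (le_of_lt hy) (hint _ _) intervalIntegrable_const ?_
    · rw [intervalIntegral.integral_const, smul_eq_mul] at this
      linarith
    · intro t ht
      have ht2 : t ≤ -x := ht.2
      have : f t = f (-t) := by rw [← heven t]
      rw [this]
      exact hmono hx (by simp; linarith) (by linarith)
  have hsplit : (∫ t in y..(-x), f t) + A = ∫ t in y..x, f t :=
    intervalIntegral.integral_add_adjacent_intervals (hint _ _) (hint _ _)
  have hxy : 0 < x - y := by linarith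
  rw [← hsplit]
  have hfxA : f x ≤ (2 * x)⁻¹ * A := by
    rw [le_inv_mul_iff₀ (by linarith)]; linarith
  have h2 : (∫ t in y..(-x), f t) ≤ (-x - y) * ((2 * x)⁻¹ * A) := by
    calc (∫ t in y..(-x), f t) ≤ (-x - y) * f x := h1
    _ ≤ (-x - y) * ((2 * x)⁻¹ * A) :=
        mul_le_mul_of_nonneg_left hfxA (by linarith)
  rw [inv_mul_le_iff₀ hxy]
  have hA2 : A = 2 * x * ((2 * x)⁻¹ * A) := by
    field_simp
  calc (∫ t in y..(-x), f t) + A ≤ (-x - y) * ((2 * x)⁻¹ * A) + 2 * x * ((2 * x)⁻¹ * A) := by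
        rw [← hA2]; linarith
  _ = (x - y) * ((2 * x)⁻¹ * A) := by ring

end aux

/-- If `f` is locally integrable, even and nonincreasing on `(0,∞)`, then for `x > 0` and
`y < −x` the average of `f` over `[y,x]` is at most the average over `[−x,x]`; consequently
`M f x` is the supremum of averages over intervals `[y,x]` with `−x ≤ y < x`. -/
theorem statement4 (f : ℝ → ℝ) (hloc : LocallyIntegrable f volume)
    (heven : ∀ x : ℝ, f (-x) = f x) (hmono : AntitoneOn f (Set.Ioi 0)) :
    (∀ x : ℝ, 0 < x → ∀ y : ℝ, y < -x →
      (x - y)⁻¹ * ∫ t in y..x, f t ≤ (2 * x)⁻¹ * ∫ t in (-x)..x, f t) ∧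
    (∀ x : ℝ, 0 < x →
      maxFn f x =
        sSup {z : ℝ | ∃ y : ℝ, -x ≤ y ∧ y < x ∧ z = (x - y)⁻¹ * ∫ t in y..x, f t}) := by
  constructor
  · exact fun x hx y hy => aux_part1 f hloc heven hmono hx hy
  · intro x hx
    have hint := aux_intInt f hloc
    have hintabs : ∀ a b : ℝ, IntervalIntegrable (fun t => |f t|) volume a b :=
      fun a b => (hint a b).abs
    set S2 := {z : ℝ | ∃ y : ℝ, -x ≤ y ∧ y < x ∧ z = (x - y)⁻¹ * ∫ t in y..x, f t} with hS2def
    set I := ∫ t in (-x)..x, |f t| with hIdef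
    have hI0 : 0 ≤ I := intervalIntegral.integral_nonneg (by linarith) (fun t _ => abs_nonneg _)
    have hIle : ∀ y : ℝ, -x ≤ y → y ≤ x → (∫ t in y..x, f t) ≤ I := by
      intro y h1 h2
      have e1 : (∫ t in y..x, f t) ≤ ∫ t in y..x, |f t| :=
        intervalIntegral.integral_mono_on h2 (hint _ _) (hintabs _ _) (fun t _ => le_abs_self _)
      have e2 : (∫ t in (-x)..y, |f t|) + (∫ t in y..x, |f t|) = I :=
        intervalIntegral.integral_add_adjacent_intervals (hintabs _ _) (hintabs _ _)
      have e3 : 0 ≤ ∫ t in (-x)..y, |f t| :=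
        intervalIntegral.integral_nonneg h1 (fun t _ => abs_nonneg _)
      linarith
    set C := max (2 / x * I) (f (x / 2)) with hCdef
    have hbound : ∀ y : ℝ, -x ≤ y → y < x → (x - y)⁻¹ * (∫ t in y..x, f t) ≤ C := by
      intro y h1 h2
      rcases le_or_gt y (x / 2) with h3 | h3
      · refine le_trans ?_ (le_max_left _ _)
        have hxy : (0:ℝ) < x - y := by linarith
        have hi : (x - y)⁻¹ ≤ 2 / x := by
          rw [show (2:ℝ) / x = (x / 2)⁻¹ by rw [inv_div]]
          exact inv_anti₀ (by positivity) (by linarith)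
        calc (x - y)⁻¹ * (∫ t in y..x, f t) ≤ (x - y)⁻¹ * I :=
              mul_le_mul_of_nonneg_left (hIle y h1 (le_of_lt h2)) (by positivity)
          _ ≤ 2 / x * I := mul_le_mul_of_nonneg_right hi hI0
      · refine le_trans ?_ (le_max_right _ _)
        have hxy : (0:ℝ) < x - y := by linarith
        have hle : (∫ t in y..x, f t) ≤ (x - y) * f (x / 2) := by
          have := intervalIntegral.integral_mono_on (f := f) (g := fun _ => f (x / 2))
            (le_of_lt h2) (hint _ _) intervalIntegrable_const
            (fun t ht => hmono (Set.mem_Ioi.mpr (by positivity))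
              (Set.mem_Ioi.mpr (by linarith [ht.1])) (by linarith [ht.1]))
          rwa [intervalIntegral.integral_const, smul_eq_mul] at this
        calc (x - y)⁻¹ * (∫ t in y..x, f t) ≤ (x - y)⁻¹ * ((x - y) * f (x / 2)) :=
              mul_le_mul_of_nonneg_left hle (by positivity)
          _ = f (x / 2) := by field_simp
    have hAS2 : ((x - -x)⁻¹ * ∫ t in (-x)..x, f t) ∈ S2 :=
      ⟨-x, le_refl _, by linarith, rfl⟩
    have hS2ne : S2.Nonempty := ⟨_, hAS2⟩
    have hS2bdd : BddAbove S2 := ⟨C, by rintro z ⟨y, h1, h2, rfl⟩; exact hbound y h1 h2⟩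
    set m := sSup S2 with hmdef
    have hAm : (x - -x)⁻¹ * (∫ t in (-x)..x, f t) ≤ m := le_csSup hS2bdd hAS2
    have hfxm : f x ≤ m := by
      have h1 := aux_fx_le f hloc heven hmono hx
      have h2x : (0:ℝ) < x - -x := by linarith
      have h2 : f x ≤ (x - -x)⁻¹ * ∫ t in (-x)..x, f t := by
        rw [le_inv_mul_iff₀ h2x]; nlinarith
      linarith
    have hS1le : ∀ z ∈ {z : ℝ | ∃ a b : ℝ, a < x ∧ x < b ∧ z = (b - a)⁻¹ * ∫ t in a..b, f t},
        z ≤ m := by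
      rintro z ⟨a, b, ha, hb, rfl⟩
      have hsplit : (∫ t in a..x, f t) + (∫ t in x..b, f t) = ∫ t in a..b, f t :=
        intervalIntegral.integral_add_adjacent_intervals (hint _ _) (hint _ _)
      have hxb : (∫ t in x..b, f t) ≤ (b - x) * m := by
        have hh : (∫ t in x..b, f t) ≤ (b - x) * f x := by
          have := intervalIntegral.integral_mono_on (f := f) (g := fun _ => f x)
            (le_of_lt hb) (hint _ _) intervalIntegrable_const
            (fun t ht => hmono (Set.mem_Ioi.mpr hx)
              (Set.mem_Ioi.mpr (by linarith [ht.1])) ht.1)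
          rwa [intervalIntegral.integral_const, smul_eq_mul] at this
        calc (∫ t in x..b, f t) ≤ (b - x) * f x := hh
          _ ≤ (b - x) * m := mul_le_mul_of_nonneg_left hfxm (by linarith)
      have hax : (∫ t in a..x, f t) ≤ (x - a) * m := by
        have hxa : (0:ℝ) < x - a := by linarith
        rcases le_or_gt (-x) a with h | h
        · have hm1 : (x - a)⁻¹ * (∫ t in a..x, f t) ≤ m := le_csSup hS2bdd ⟨a, h, ha, rfl⟩
          calc (∫ t in a..x, f t) = (x - a) * ((x - a)⁻¹ * ∫ t in a..x, f t) := by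
                field_simp
            _ ≤ (x - a) * m := mul_le_mul_of_nonneg_left hm1 (le_of_lt hxa)
        · have hm1 : (x - a)⁻¹ * (∫ t in a..x, f t) ≤ (2 * x)⁻¹ * ∫ t in (-x)..x, f t :=
            aux_part1 f hloc heven hmono hx h
          have hm2 : (x - a)⁻¹ * (∫ t in a..x, f t) ≤ m := by
            refine le_trans hm1 (le_trans (le_of_eq ?_) hAm)
            rw [show x - -x = 2 * x by ring]
          calc (∫ t in a..x, f t) = (x - a) * ((x - a)⁻¹ * ∫ t in a..x, f t) := by
                field_simp
            _ ≤ (x - a) * m := mul_le_mul_of_nonneg_left hm2 (le_of_lt hxa)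
      have hab : (0:ℝ) < b - a := by linarith
      rw [inv_mul_le_iff₀ hab]
      rw [← hsplit]
      nlinarith
    have hS1ne : {z : ℝ | ∃ a b : ℝ, a < x ∧ x < b ∧
        z = (b - a)⁻¹ * ∫ t in a..b, f t}.Nonempty :=
      ⟨_, x - 1, x + 1, by linarith, by linarith, rfl⟩
    have hS1bdd : BddAbove {z : ℝ | ∃ a b : ℝ, a < x ∧ x < b ∧
        z = (b - a)⁻¹ * ∫ t in a..b, f t} := ⟨m, hS1le⟩
    rw [maxFn]
    apply le_antisymm
    · exact csSup_le hS1ne hS1le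
    · apply csSup_le hS2ne
      rintro z ⟨y, h1, h2, rfl⟩
      have hcont : ContinuousAt (fun b => (b - y)⁻¹ * ∫ t in y..b, f t) x := by
        apply ContinuousAt.mul
        · exact ((continuous_id.sub continuous_const).continuousAt).inv₀
            (by simp only [Pi.sub_apply, id_eq]; intro hc; linarith [sub_eq_zero.mp hc])
        · exact (intervalIntegral.continuous_primitive hint y).continuousAt
      have htend : Tendsto (fun b => (b - y)⁻¹ * ∫ t in y..b, f t) (𝓝[>] x)
          (𝓝 ((x - y)⁻¹ * ∫ t in y..x, f t)) :=
        hcont.tendsto.mono_left nhdsWithin_le_nhds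
      refine le_of_tendsto htend ?_
      filter_upwards [self_mem_nhdsWithin] with b hb
      exact le_csSup hS1bdd ⟨y, b, h2, hb, rfl⟩
end

section
/- Let K > 0 and let f : ℝ → ℝ satisfy condition (2.1). Then the maximal function M f is K-Lipschitz on ℝ, and the map x ↦ a(x) is K²-Lipschitz on (0,∞) and on (−∞,0). -/
open MeasureTheory Set Filter
open scoped ENNReal Topology

/-- Condition (2.1): for all `x < y` with `0 ∉ (x,y)`,
`1/K ≤ −sign(x+y)·(f(y)−f(x))/(y−x) ≤ K`. -/
def Cond21 (K : ℝ) (f : ℝ → ℝ) : Prop :=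
  ∀ x y : ℝ, x < y → (0:ℝ) ∉ Set.Ioo x y →
    1 / K ≤ -Real.sign (x + y) * ((f y - f x) / (y - x)) ∧
      -Real.sign (x + y) * ((f y - f x) / (y - x)) ≤ K

/-- `a` is the map assigning to each `x ≠ 0` the (unique) point `a x` on the other side of
the origin such that `M f x` equals the average of `f` over the interval between `a x` and `x`. -/
def IsArgOf (f : ℝ → ℝ) (a : ℝ → ℝ) : Prop :=
  ∀ x : ℝ, x ≠ 0 →
    ((0 < x → a x < 0) ∧ (x < 0 → 0 < a x)) ∧
    maxFn f x = (x - a x)⁻¹ * ∫ t in (a x)..x, f t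

/-- `f` is twice differentiable on `ℝ \ {0}`. -/
def TwiceDiffOffZero (f : ℝ → ℝ) : Prop :=
  ∀ x : ℝ, x ≠ 0 → DifferentiableAt ℝ f x ∧ DifferentiableAt ℝ (deriv f) x

variable {K : ℝ} {f : ℝ → ℝ}

lemma slopeNeg (hK : 0 < K) (hf : Cond21 K f) {u v : ℝ} (huv : u < v) (hv : v ≤ 0) :
    (v - u)/K ≤ f v - f u ∧ f v - f u ≤ K * (v - u) := by
  have h0 : (0:ℝ) ∉ Set.Ioo u v := fun h => absurd h.2 (not_lt.2 hv)
  have hs : Real.sign (u + v) = -1 := Real.sign_of_neg (by nlinarith)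
  have h := hf u v huv h0
  rw [hs] at h
  have hvu : 0 < v - u := by linarith
  have hfv : f v - f u = ((f v - f u)/(v-u)) * (v - u) := by field_simp
  have hne : v - u ≠ 0 := hvu.ne'
  simp only [neg_neg, one_mul, neg_one_mul] at h
  constructor
  · rw [div_le_iff₀ hK]
    calc v - u = (1/K) * ((v-u)*K) := by field_simp
    _ ≤ ((f v - f u)/(v-u)) * ((v-u)*K) := mul_le_mul_of_nonneg_right h.1 (by positivity)
    _ = (f v - f u) * K := by field_simp
  · rw [hfv]; nlinarith [h.2]

lemma slopePos (hK : 0 < K) (hf : Cond21 K f) {u v : ℝ} (huv : u < v) (hu : 0 ≤ u) :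
    (v - u)/K ≤ f u - f v ∧ f u - f v ≤ K * (v - u) := by
  have h0 : (0:ℝ) ∉ Set.Ioo u v := fun h => absurd h.1 (not_lt.2 hu)
  have hs : Real.sign (u + v) = 1 := Real.sign_of_pos (by nlinarith)
  have h := hf u v huv h0
  rw [hs] at h
  have hvu : 0 < v - u := by linarith
  have hfv : f v - f u = ((f v - f u)/(v-u)) * (v - u) := by field_simp
  have hfv' : f u - f v = -(((f v - f u)/(v-u)) * (v - u)) := by rw [← hfv]; ring
  have hne : v - u ≠ 0 := hvu.ne'
  simp only [neg_one_mul] at h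
  constructor
  · rw [div_le_iff₀ hK]
    calc v - u = (1/K) * ((v-u)*K) := by field_simp
    _ ≤ (-((f v - f u)/(v-u))) * ((v-u)*K) := mul_le_mul_of_nonneg_right h.1 (by positivity)
    _ = (f u - f v) * K := by field_simp; ring
  · rw [hfv']; nlinarith [h.2]

lemma lipf (hK : 0 < K) (hf : Cond21 K f) (u v : ℝ) : |f v - f u| ≤ K * |v - u| := by
  rcases lt_trichotomy u v with h | h | h
  · rw [abs_of_pos (by linarith : (0:ℝ) < v - u)]
    rcases le_or_gt v 0 with hv | hv
    · have := slopeNeg hK hf h hv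
      rw [abs_le]; constructor <;> nlinarith [div_nonneg (by linarith : (0:ℝ) ≤ v - u) hK.le]
    · rcases le_or_gt 0 u with hu | hu
      · have := slopePos hK hf h hu
        rw [abs_le]; constructor <;> nlinarith [div_nonneg (by linarith : (0:ℝ) ≤ v - u) hK.le]
      · have h1 := slopeNeg hK hf hu le_rfl
        have h2 := slopePos hK hf hv le_rfl
        rw [abs_le]; constructor <;> nlinarith [div_nonneg (by linarith : (0:ℝ) ≤ 0 - u) hK.le,
          div_nonneg (by linarith : (0:ℝ) ≤ v - 0) hK.le]
  · simp [h]
  · rw [abs_of_neg (by linarith : v - u < 0)]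
    rcases le_or_gt u 0 with hu | hu
    · have := slopeNeg hK hf h hu
      rw [abs_le]; constructor <;> nlinarith [div_nonneg (by linarith : (0:ℝ) ≤ u - v) hK.le]
    · rcases le_or_gt 0 v with hv | hv
      · have := slopePos hK hf h hv
        rw [abs_le]; constructor <;> nlinarith [div_nonneg (by linarith : (0:ℝ) ≤ u - v) hK.le]
      · have h1 := slopeNeg hK hf hv le_rfl
        have h2 := slopePos hK hf hu le_rfl
        rw [abs_le]; constructor <;> nlinarith [div_nonneg (by linarith : (0:ℝ) ≤ 0 - v) hK.le,
          div_nonneg (by linarith : (0:ℝ) ≤ u - 0) hK.le]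

lemma contf (hK : 0 < K) (hf : Cond21 K f) : Continuous f := by
  have : LipschitzWith (Real.toNNReal K) f := by
    rw [lipschitzWith_iff_dist_le_mul]
    intro x y
    rw [Real.dist_eq, Real.dist_eq, Real.coe_toNNReal K hK.le]
    exact lipf hK hf y x
  exact this.continuous

lemma le_f0 (hK : 0 < K) (hf : Cond21 K f) (t : ℝ) : f t ≤ f 0 := by
  rcases lt_trichotomy t 0 with h | h | h
  · nlinarith [(slopeNeg hK hf h le_rfl).1, div_nonneg (by linarith : (0:ℝ) ≤ 0 - t) hK.le]
  · simp [h]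
  · nlinarith [(slopePos hK hf h le_rfl).1, div_nonneg (by linarith : (0:ℝ) ≤ t - 0) hK.le]

variable {K : ℝ} {f : ℝ → ℝ}

lemma int_lb (hK : 0 < K) (hl : ∀ u v : ℝ, |f v - f u| ≤ K * |v - u|) (hc : Continuous f)
    {c a : ℝ} (hca : c ≤ a) :
    (a - c) * f a - K * (a - c)^2/2 ≤ ∫ y in c..a, f y := by
  have h1 : ∀ t ∈ Set.Icc c a, f a - K * (a - t) ≤ f t := by
    intro t ht
    have := hl t a
    rw [abs_le] at this
    have h2 : |a - t| = a - t := abs_of_nonneg (by linarith [ht.2])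
    rw [h2] at this
    linarith [this.1]
  have h3 : ∫ y in c..a, (f a - K * (a - y)) ≤ ∫ y in c..a, f y := by
    apply intervalIntegral.integral_mono_on hca _ (hc.intervalIntegrable c a) h1
    exact ((continuous_const.sub (continuous_const.mul (continuous_const.sub continuous_id))).intervalIntegrable c a)
  have h4 : ∫ y in c..a, (f a - K * (a - y)) = (a - c) * f a - K * (a - c)^2/2 := by
    rw [intervalIntegral.integral_sub (by apply Continuous.intervalIntegrable; fun_prop) (by apply Continuous.intervalIntegrable; fun_prop)]
    rw [intervalIntegral.integral_const_mul]
    have : ∫ y in c..a, (a - y) = ∫ y in c..a, -(y - a) := by congr 1; ext y; ring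
    rw [this, intervalIntegral.integral_neg, intervalIntegral.integral_comp_sub_right (fun x => x) a,
      integral_id]
    simp
    ring
  linarith
lemma int_ub (hK : 0 < K) (hl : ∀ u v : ℝ, |f v - f u| ≤ K * |v - u|) (hc : Continuous f)
    {a b : ℝ} (hab : a ≤ b) :
    ∫ y in a..b, f y ≤ (b - a) * f a + K * (b - a)^2/2 := by
  have h1 : ∀ t ∈ Set.Icc a b, f t ≤ f a + K * (t - a) := by
    intro t ht
    have := hl a t
    rw [abs_le] at this
    have h2 : |t - a| = t - a := abs_of_nonneg (by linarith [ht.1])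
    rw [h2] at this
    linarith [this.2]
  have h3 : ∫ y in a..b, f y ≤ ∫ y in a..b, (f a + K * (y - a)) := by
    apply intervalIntegral.integral_mono_on hab (hc.intervalIntegrable a b) _ h1
    apply Continuous.intervalIntegrable; fun_prop
  have h4 : ∫ y in a..b, (f a + K * (y - a)) = (b - a) * f a + K * (b - a)^2/2 := by
    rw [intervalIntegral.integral_add (by apply Continuous.intervalIntegrable; fun_prop) (by apply Continuous.intervalIntegrable; fun_prop),
      intervalIntegral.integral_const_mul,
      intervalIntegral.integral_comp_sub_right (fun x => x) a, integral_id]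
    simp
    ring
  linarith

lemma int_lb' (hl : ∀ u v : ℝ, |f v - f u| ≤ K * |v - u|) (hc : Continuous f)
    {b b' : ℝ} (hbb : b ≤ b') :
    (b' - b) * f b - K * (b' - b)^2/2 ≤ ∫ y in b..b', f y := by
  have h1 : ∀ t ∈ Set.Icc b b', f b - K * (t - b) ≤ f t := by
    intro t ht
    have := hl b t
    rw [abs_le] at this
    have h2 : |t - b| = t - b := abs_of_nonneg (by linarith [ht.1])
    rw [h2] at this
    linarith [this.1]
  have h3 : ∫ y in b..b', (f b - K * (y - b)) ≤ ∫ y in b..b', f y := by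
    apply intervalIntegral.integral_mono_on hbb _ (hc.intervalIntegrable b b') h1
    exact ((continuous_const.sub (continuous_const.mul (continuous_id.sub continuous_const))).intervalIntegrable b b')
  have h4 : ∫ y in b..b', (f b - K * (y - b)) = (b' - b) * f b - K * (b' - b)^2/2 := by
    rw [intervalIntegral.integral_sub (by apply Continuous.intervalIntegrable; fun_prop)
      (by apply Continuous.intervalIntegrable; fun_prop),
      intervalIntegral.integral_const_mul,
      intervalIntegral.integral_comp_sub_right (fun x => x) b, integral_id]
    simp
    ring
  linarith

lemma int_ub' (hl : ∀ u v : ℝ, |f v - f u| ≤ K * |v - u|) (hc : Continuous f)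
    {a b : ℝ} (hab : a ≤ b) :
    ∫ y in a..b, f y ≤ (b - a) * f b + K * (b - a)^2/2 := by
  have h1 : ∀ t ∈ Set.Icc a b, f t ≤ f b + K * (b - t) := by
    intro t ht
    have := hl t b
    rw [abs_le] at this
    have h2 : |b - t| = b - t := abs_of_nonneg (by linarith [ht.2])
    rw [h2] at this
    linarith [this.2]
  have h3 : ∫ y in a..b, f y ≤ ∫ y in a..b, (f b + K * (b - y)) := by
    apply intervalIntegral.integral_mono_on hab (hc.intervalIntegrable a b) _ h1
    apply Continuous.intervalIntegrable; fun_prop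
  have h4 : ∫ y in a..b, (f b + K * (b - y)) = (b - a) * f b + K * (b - a)^2/2 := by
    rw [intervalIntegral.integral_add (by apply Continuous.intervalIntegrable; fun_prop)
      (by apply Continuous.intervalIntegrable; fun_prop),
      intervalIntegral.integral_const_mul]
    have : ∫ y in a..b, (b - y) = ∫ y in a..b, -(y - b) := by congr 1; ext y; ring
    rw [this, intervalIntegral.integral_neg, intervalIntegral.integral_comp_sub_right (fun x => x) b,
      integral_id]
    simp
    ring
  linarith

lemma avg_ext_left (hK : 0 < K) (hl : ∀ u v : ℝ, |f v - f u| ≤ K * |v - u|) (hc : Continuous f)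
    {c a b : ℝ} (hca : c ≤ a) (hab : a < b) :
    (b - a)⁻¹ * (∫ y in a..b, f y) - K * (a - c)/2 ≤ (b - c)⁻¹ * (∫ y in c..b, f y) := by
  have hL : (0:ℝ) < b - a := by linarith
  have hLc : (0:ℝ) < b - c := by linarith
  have hsplit : (∫ y in c..b, f y) = (∫ y in c..a, f y) + ∫ y in a..b, f y :=
    (intervalIntegral.integral_add_adjacent_intervals (hc.intervalIntegrable c a)
      (hc.intervalIntegrable a b)).symm
  set I := ∫ y in a..b, f y with hI
  set J := ∫ y in c..a, f y with hJ
  have hJb := int_lb hK hl hc hca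
  have hIb := int_ub hK hl hc hab.le
  rw [hsplit]
  have e1 : (b-a)⁻¹ * I - K*(a-c)/2 = (I - K*(a-c)/2*(b-a))/(b-a) := by field_simp
  have e2 : (b-c)⁻¹ * (J + I) = (J + I)/(b-c) := by rw [inv_mul_eq_div]
  rw [e1, e2, div_le_div_iff₀ hL hLc]
  nlinarith [mul_le_mul_of_nonneg_left hIb (by linarith : (0:ℝ) ≤ a - c),
    mul_le_mul_of_nonneg_left hJb hL.le]

lemma avg_ext_right (hK : 0 < K) (hl : ∀ u v : ℝ, |f v - f u| ≤ K * |v - u|) (hc : Continuous f)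
    {a b b' : ℝ} (hab : a < b) (hbb : b ≤ b') :
    (b - a)⁻¹ * (∫ y in a..b, f y) - K * (b' - b)/2 ≤ (b' - a)⁻¹ * (∫ y in a..b', f y) := by
  have hL : (0:ℝ) < b - a := by linarith
  have hLc : (0:ℝ) < b' - a := by linarith
  have hsplit : (∫ y in a..b', f y) = (∫ y in a..b, f y) + ∫ y in b..b', f y :=
    (intervalIntegral.integral_add_adjacent_intervals (hc.intervalIntegrable a b)
      (hc.intervalIntegrable b b')).symm
  set I := ∫ y in a..b, f y with hI
  set J := ∫ y in b..b', f y with hJ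
  have hJb := int_lb' hl hc hbb
  have hIb := int_ub' hl hc hab.le
  rw [hsplit]
  have e1 : (b-a)⁻¹ * I - K*(b'-b)/2 = (I - K*(b'-b)/2*(b-a))/(b-a) := by field_simp
  have e2 : (b'-a)⁻¹ * (I + J) = (I + J)/(b'-a) := by rw [inv_mul_eq_div]
  rw [e1, e2, div_le_div_iff₀ hL hLc]
  nlinarith [mul_le_mul_of_nonneg_left hIb (by linarith : (0:ℝ) ≤ b' - b),
    mul_le_mul_of_nonneg_left hJb hL.le]

lemma maxFn_bdd (hc : Continuous f) (hb : ∀ t, f t ≤ f 0) (x : ℝ) :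
    BddAbove {z : ℝ | ∃ a b : ℝ, a < x ∧ x < b ∧ z = (b - a)⁻¹ * ∫ y in a..b, f y} := by
  refine ⟨f 0, ?_⟩
  rintro z ⟨a, b, hax, hxb, rfl⟩
  have hab : a < b := hax.trans hxb
  have h1 : (∫ y in a..b, f y) ≤ (b - a) * f 0 := by
    have := intervalIntegral.integral_mono_on (μ := volume) hab.le (hc.intervalIntegrable a b)
      (intervalIntegrable_const (c := f 0)) (fun t _ => hb t)
    simpa [smul_eq_mul, mul_comm] using this
  rw [inv_mul_le_iff₀ (by linarith : (0:ℝ) < b - a)]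
  linarith

lemma maxFn_nonempty (x : ℝ) :
    Set.Nonempty {z : ℝ | ∃ a b : ℝ, a < x ∧ x < b ∧ z = (b - a)⁻¹ * ∫ y in a..b, f y} :=
  ⟨_, x - 1, x + 1, by linarith, by linarith, rfl⟩

lemma maxFn_ge (hc : Continuous f) (hb : ∀ t, f t ≤ f 0) {x a b : ℝ} (hax : a < x) (hxb : x < b) :
    (b - a)⁻¹ * (∫ y in a..b, f y) ≤ maxFn f x :=
  le_csSup (maxFn_bdd hc hb x) ⟨a, b, hax, hxb, rfl⟩

lemma maxFn_lip (hK : 0 < K) (hl : ∀ u v : ℝ, |f v - f u| ≤ K * |v - u|) (hc : Continuous f)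
    (hb : ∀ t, f t ≤ f 0) :
    LipschitzWith (Real.toNNReal K) (maxFn f) := by
  rw [lipschitzWith_iff_dist_le_mul]
  have key : ∀ x₁ x₂ : ℝ, maxFn f x₂ - maxFn f x₁ ≤ K * |x₁ - x₂| := by
    intro x₁ x₂
    rw [sub_le_iff_le_add]
    apply csSup_le (maxFn_nonempty x₂)
    rintro z ⟨a, b, hax, hxb, rfl⟩
    have habs : (0:ℝ) ≤ K * |x₁ - x₂| := by positivity
    rcases lt_or_ge a x₁ with h1 | h1
    · rcases lt_or_ge x₁ b with h2 | h2
      · linarith [maxFn_ge hc hb h1 h2]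
      · -- b ≤ x₁, so x₂ < b ≤ x₁ ; extend right to b' = b + (x₁ - x₂)
        have hd : (0:ℝ) < x₁ - x₂ := by linarith
        have habs2 : |x₁ - x₂| = x₁ - x₂ := abs_of_pos hd
        have hext := avg_ext_right hK hl hc (hax.trans hxb) (by linarith : b ≤ b + (x₁ - x₂))
        have hmem : (b + (x₁ - x₂) - a)⁻¹ * (∫ y in a..(b + (x₁ - x₂)), f y) ≤ maxFn f x₁ :=
          maxFn_ge hc hb (by linarith : a < x₁) (by linarith : x₁ < b + (x₁ - x₂))
        have he : b + (x₁ - x₂) - b = x₁ - x₂ := by ring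
        rw [he] at hext
        rw [habs2]
        nlinarith [hK.le]
    · -- x₁ ≤ a < x₂ ; extend left to c = a - (x₂ - x₁)
      have hd : (0:ℝ) < x₂ - x₁ := by linarith
      have habs2 : |x₁ - x₂| = x₂ - x₁ := by rw [abs_sub_comm]; exact abs_of_pos hd
      have hext := avg_ext_left hK hl hc (by linarith : a - (x₂ - x₁) ≤ a) (hax.trans hxb)
      have hmem : (b - (a - (x₂ - x₁)))⁻¹ * (∫ y in (a - (x₂ - x₁))..b, f y) ≤ maxFn f x₁ :=
        maxFn_ge hc hb (by linarith : a - (x₂ - x₁) < x₁) (by linarith : x₁ < b)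
      have he : a - (a - (x₂ - x₁)) = x₂ - x₁ := by ring
      rw [he] at hext
      rw [habs2]
      nlinarith [hK.le]
  intro x y
  rw [Real.dist_eq, Real.dist_eq, Real.coe_toNNReal K hK.le, abs_le]
  constructor
  · have := key x y; linarith
  · have := key y x; rw [abs_sub_comm] at this; linarith

lemma avg_le_left (hc : Continuous f) (hb : ∀ t, f t ≤ f 0) {α x : ℝ} (hax : α < x) :
    (x - α)⁻¹ * (∫ y in α..x, f y) ≤ maxFn f x := by
  set g : ℝ → ℝ := fun b => (b - α)⁻¹ * ∫ y in α..b, f y with hg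
  have hcont : ContinuousAt g x := by
    apply ContinuousAt.mul
    · exact (ContinuousAt.sub continuousAt_id continuousAt_const).inv₀
        (by exact sub_ne_zero.2 hax.ne')
    · exact (intervalIntegral.continuous_primitive (fun a b => hc.intervalIntegrable a b) α).continuousAt
  have htend : Tendsto g (𝓝[>] x) (𝓝 (g x)) := hcont.tendsto.mono_left nhdsWithin_le_nhds
  have hev : ∀ᶠ b in 𝓝[>] x, g b ≤ maxFn f x := by
    filter_upwards [self_mem_nhdsWithin] with b hbx
    exact maxFn_ge hc hb hax hbx
  exact le_of_tendsto htend hev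

lemma avg_le_right (hc : Continuous f) (hb : ∀ t, f t ≤ f 0) {x β : ℝ} (hxb : x < β) :
    (β - x)⁻¹ * (∫ y in x..β, f y) ≤ maxFn f x := by
  set g : ℝ → ℝ := fun a => (β - a)⁻¹ * ∫ y in a..β, f y with hg
  have hcont : ContinuousAt g x := by
    apply ContinuousAt.mul
    · exact (ContinuousAt.sub continuousAt_const continuousAt_id).inv₀
        (by exact sub_ne_zero.2 hxb.ne')
    · have : Continuous fun a => ∫ y in a..β, f y := by
        have h1 : Continuous fun a => ∫ y in β..a, f y :=
          intervalIntegral.continuous_primitive (fun a b => hc.intervalIntegrable a b) β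
        have : (fun a => ∫ y in a..β, f y) = fun a => -∫ y in β..a, f y := by
          ext a; rw [intervalIntegral.integral_symm]
        rw [this]; exact h1.neg
      exact this.continuousAt
  have htend : Tendsto g (𝓝[<] x) (𝓝 (g x)) := hcont.tendsto.mono_left nhdsWithin_le_nhds
  have hev : ∀ᶠ a in 𝓝[<] x, g a ≤ maxFn f x := by
    filter_upwards [self_mem_nhdsWithin] with a hax
    exact maxFn_ge hc hb hax hxb
  exact le_of_tendsto htend hev

lemma opt_left (hc : Continuous f) (hb : ∀ t, f t ≤ f 0) {x α : ℝ} (hα : α < x)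
    (heq : maxFn f x = (x - α)⁻¹ * ∫ t in α..x, f t) : f α = maxFn f x := by
  set g : ℝ → ℝ := fun t => (x - t)⁻¹ * ∫ y in t..x, f y with hg
  have hga : g α = maxFn f x := heq.symm
  have hmax : IsLocalMax g α := by
    filter_upwards [Iio_mem_nhds hα] with t ht
    rw [hga]
    exact avg_le_left hc hb ht
  have hne : x - α ≠ 0 := by intro h; linarith [sub_eq_zero.mp h]
  have hF : HasDerivAt (fun t => ∫ y in t..x, f y) (-f α) α :=
    intervalIntegral.integral_hasDerivAt_left (hc.intervalIntegrable α x)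
      (hc.stronglyMeasurableAtFilter volume _) hc.continuousAt
  have h1 : HasDerivAt (fun t => (x - t)⁻¹) (-(-1) / (x - α)^2) α :=
    ((hasDerivAt_id α).const_sub x).inv hne
  have hgd : HasDerivAt g ((-(-1) / (x - α)^2) * (∫ y in α..x, f y) + (x - α)⁻¹ * (-f α)) α :=
    h1.mul hF
  have h0 : (-(-1) / (x - α)^2) * (∫ y in α..x, f y) + (x - α)⁻¹ * (-f α) = 0 := by
    rw [← hgd.deriv]; exact hmax.deriv_eq_zero
  have : f α = (x - α)⁻¹ * ∫ y in α..x, f y := by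
    field_simp at h0 ⊢
    nlinarith [h0, sq_nonneg (x - α)]
  rw [this, ← heq]

lemma opt_right (hc : Continuous f) (hb : ∀ t, f t ≤ f 0) {x α : ℝ} (hα : x < α)
    (heq : maxFn f x = (x - α)⁻¹ * ∫ t in α..x, f t) : f α = maxFn f x := by
  have heq' : maxFn f x = (α - x)⁻¹ * ∫ t in x..α, f t := by
    rw [heq, intervalIntegral.integral_symm x α, show x - α = -(α - x) by ring, inv_neg]
    ring
  set g : ℝ → ℝ := fun t => (t - x)⁻¹ * ∫ y in x..t, f y with hg
  have hga : g α = maxFn f x := heq'.symm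
  have hmax : IsLocalMax g α := by
    filter_upwards [Ioi_mem_nhds hα] with t ht
    rw [hga]
    exact avg_le_right hc hb ht
  have hne : α - x ≠ 0 := by intro h; linarith [sub_eq_zero.mp h]
  have hF : HasDerivAt (fun t => ∫ y in x..t, f y) (f α) α :=
    intervalIntegral.integral_hasDerivAt_right (hc.intervalIntegrable x α)
      (hc.stronglyMeasurableAtFilter volume _) hc.continuousAt
  have h1 : HasDerivAt (fun t => (t - x)⁻¹) (-1 / (α - x)^2) α :=
    ((hasDerivAt_id α).sub_const x).inv hne
  have hgd : HasDerivAt g ((-1 / (α - x)^2) * (∫ y in x..α, f y) + (α - x)⁻¹ * f α) α :=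
    h1.mul hF
  have h0 : (-1 / (α - x)^2) * (∫ y in x..α, f y) + (α - x)⁻¹ * f α = 0 := by
    rw [← hgd.deriv]; exact hmax.deriv_eq_zero
  have : f α = (α - x)⁻¹ * ∫ y in x..α, f y := by
    field_simp at h0 ⊢
    nlinarith [h0, sq_nonneg (α - x)]
  rw [this, ← heq']

lemma inv_lip_neg (hK : 0 < K) (hf : Cond21 K f) {u v : ℝ} (hu : u ≤ 0) (hv : v ≤ 0) :
    |u - v| ≤ K * |f u - f v| := by
  rcases lt_trichotomy u v with h | h | h
  · have h1 := (slopeNeg hK hf h hv).1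
    rw [div_le_iff₀ hK] at h1
    rw [abs_of_neg (by linarith : u - v < 0)]
    calc -(u - v) = v - u := by ring
    _ ≤ (f v - f u) * K := h1
    _ ≤ |f u - f v| * K := by
        apply mul_le_mul_of_nonneg_right _ hK.le
        rw [abs_sub_comm]; exact le_abs_self _
    _ = K * |f u - f v| := by ring
  · simp [h]
  · have h1 := (slopeNeg hK hf h hu).1
    rw [div_le_iff₀ hK] at h1
    rw [abs_of_pos (by linarith : 0 < u - v)]
    calc u - v ≤ (f u - f v) * K := h1
    _ ≤ |f u - f v| * K := mul_le_mul_of_nonneg_right (le_abs_self _) hK.le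
    _ = K * |f u - f v| := by ring

lemma inv_lip_pos (hK : 0 < K) (hf : Cond21 K f) {u v : ℝ} (hu : 0 ≤ u) (hv : 0 ≤ v) :
    |u - v| ≤ K * |f u - f v| := by
  rcases lt_trichotomy u v with h | h | h
  · have h1 := (slopePos hK hf h hu).1
    rw [div_le_iff₀ hK] at h1
    rw [abs_of_neg (by linarith : u - v < 0)]
    calc -(u - v) = v - u := by ring
    _ ≤ (f u - f v) * K := h1
    _ ≤ |f u - f v| * K := mul_le_mul_of_nonneg_right (le_abs_self _) hK.le
    _ = K * |f u - f v| := by ring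
  · simp [h]
  · have h1 := (slopePos hK hf h hv).1
    rw [div_le_iff₀ hK] at h1
    rw [abs_of_pos (by linarith : 0 < u - v)]
    calc u - v ≤ (f v - f u) * K := h1
    _ ≤ |f u - f v| * K := by
        apply mul_le_mul_of_nonneg_right _ hK.le
        rw [abs_sub_comm]; exact le_abs_self _
    _ = K * |f u - f v| := by ring


/-- Under condition (2.1), the maximal function `M f` is `K`-Lipschitz and the map `a`
is `K²`-Lipschitz on `(0,∞)` and on `(−∞,0)`. -/
theorem statement5 (K : ℝ) (hK : 0 < K) (f : ℝ → ℝ) (hf : Cond21 K f)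
    (a : ℝ → ℝ) (ha : IsArgOf f a) :
    LipschitzWith (Real.toNNReal K) (maxFn f) ∧
    LipschitzOnWith (Real.toNNReal (K ^ 2)) a (Set.Ioi 0) ∧
    LipschitzOnWith (Real.toNNReal (K ^ 2)) a (Set.Iio 0) := by
  have hl : ∀ u v : ℝ, |f v - f u| ≤ K * |v - u| := lipf hK hf
  have hc : Continuous f := contf hK hf
  have hb : ∀ t, f t ≤ f 0 := le_f0 hK hf
  have hML : LipschitzWith (Real.toNNReal K) (maxFn f) := maxFn_lip hK hl hc hb
  have hMd : ∀ x y : ℝ, |maxFn f x - maxFn f y| ≤ K * |x - y| := by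
    intro x y
    have := hML.dist_le_mul x y
    rwa [Real.dist_eq, Real.dist_eq, Real.coe_toNNReal K hK.le] at this
  have hopt_pos : ∀ x : ℝ, 0 < x → f (a x) = maxFn f x ∧ a x ≤ 0 := by
    intro x hx
    obtain ⟨⟨h1, _⟩, heq⟩ := ha x (ne_of_gt hx)
    have hax : a x < 0 := h1 hx
    exact ⟨opt_left hc hb (hax.trans hx) heq, hax.le⟩
  have hopt_neg : ∀ x : ℝ, x < 0 → f (a x) = maxFn f x ∧ 0 ≤ a x := by
    intro x hx
    obtain ⟨⟨_, h2⟩, heq⟩ := ha x (ne_of_lt hx)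
    have hax : 0 < a x := h2 hx
    exact ⟨opt_right hc hb (hx.trans hax) heq, hax.le⟩
  refine ⟨hML, ?_, ?_⟩
  · rw [lipschitzOnWith_iff_dist_le_mul]
    intro x hx y hy
    obtain ⟨hfx, hax⟩ := hopt_pos x hx
    obtain ⟨hfy, hay⟩ := hopt_pos y hy
    rw [Real.dist_eq, Real.dist_eq, Real.coe_toNNReal _ (by positivity : (0:ℝ) ≤ K^2)]
    calc |a x - a y| ≤ K * |f (a x) - f (a y)| := inv_lip_neg hK hf hax hay
    _ = K * |maxFn f x - maxFn f y| := by rw [hfx, hfy]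
    _ ≤ K * (K * |x - y|) := mul_le_mul_of_nonneg_left (hMd x y) hK.le
    _ = K^2 * |x - y| := by ring
  · rw [lipschitzOnWith_iff_dist_le_mul]
    intro x hx y hy
    obtain ⟨hfx, hax⟩ := hopt_neg x hx
    obtain ⟨hfy, hay⟩ := hopt_neg y hy
    rw [Real.dist_eq, Real.dist_eq, Real.coe_toNNReal _ (by positivity : (0:ℝ) ≤ K^2)]
    calc |a x - a y| ≤ K * |f (a x) - f (a y)| := inv_lip_pos hK hf hax hay
    _ = K * |maxFn f x - maxFn f y| := by rw [hfx, hfy]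
    _ ≤ K * (K * |x - y|) := mul_le_mul_of_nonneg_left (hMd x y) hK.le
    _ = K^2 * |x - y| := by ring
end

section
/- Let K, D > 0 and 0 < x_0 ≤ x_1, and let m, h : [x_0, x_1] → [0, ∞) be nonnegative weakly differentiable (absolutely continuous) functions, with h nondecreasing and h(x_1) − h(x_0) ≤ D(x_1 − x_0), such that for all x_0 < x < x_1 one has m'(x) ≥ −((K + h'(x)) / (x + h(x))) · m(x). Then m(x_1) ≥ (x_0/x_1)^{max{1 + D/K, K + D}} · m(x_0). -/
open MeasureTheory Set

open intervalIntegral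

lemma swap_core {a b : ℝ} (hab : a ≤ b) {u' v' : ℝ → ℝ}
    (hu : IntegrableOn u' (Icc a b) volume) (hv : IntegrableOn v' (Icc a b) volume) :
    ∫ t in a..b, u' t * (∫ s in a..t, v' s)
      = ∫ s in a..b, v' s * ((∫ t in a..b, u' t) - ∫ t in a..s, u' t) := by
  set μ := volume.restrict (Ioc a b) with hμ
  have hu1 : Integrable u' μ := hu.mono_set Ioc_subset_Icc_self
  have hv1 : Integrable v' μ := hv.mono_set Ioc_subset_Icc_self
  have hiu : ∀ s ∈ Icc a b, IntervalIntegrable u' volume a s := fun s hs =>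
    (hu.mono_set (by rw [uIcc_of_le hs.1]; exact Icc_subset_Icc le_rfl hs.2)).intervalIntegrable
  have hiu2 : ∀ s ∈ Icc a b, IntervalIntegrable u' volume s b := fun s hs =>
    (hu.mono_set (by rw [uIcc_of_le hs.2]; exact Icc_subset_Icc hs.1 le_rfl)).intervalIntegrable
  set f : ℝ → ℝ → ℝ := fun t s => if s ≤ t then u' t * v' s else 0 with hf
  have hF : Integrable (Function.uncurry f) (μ.prod μ) := by
    have h1 : Integrable (fun z : ℝ × ℝ => u' z.1 * v' z.2) (μ.prod μ) := hu1.mul_prod hv1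
    have h2 : MeasurableSet {z : ℝ × ℝ | z.2 ≤ z.1} :=
      measurableSet_le measurable_snd measurable_fst
    have he : Function.uncurry f = {z : ℝ × ℝ | z.2 ≤ z.1}.indicator
        (fun z => u' z.1 * v' z.2) := by
      ext z
      by_cases hz : z.2 ≤ z.1 <;> simp [hf, Function.uncurry, indicator, hz]
    rw [he]
    exact h1.indicator h2
  have key := integral_integral_swap hF
  have L : ∫ t in a..b, u' t * (∫ s in a..t, v' s) = ∫ t, (∫ s, f t s ∂μ) ∂μ := by
    rw [integral_of_le hab]
    refine setIntegral_congr_fun measurableSet_Ioc (fun t ht => ?_)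
    have h1 : (fun s => f t s) = fun s => u' t * (Iic t).indicator v' s := by
      ext s
      by_cases hst : s ≤ t <;> simp [hf, indicator, hst]
    rw [h1, MeasureTheory.integral_const_mul, MeasureTheory.integral_indicator measurableSet_Iic, hμ,
      Measure.restrict_restrict measurableSet_Iic]
    have h2 : Iic t ∩ Ioc a b = Ioc a t := by
      ext s
      simp only [mem_inter_iff, mem_Iic, mem_Ioc]
      exact ⟨fun ⟨h1, h2, h3⟩ => ⟨h2, h1⟩, fun ⟨h1', h2'⟩ => ⟨h2', h1', h2'.trans ht.2⟩⟩
    rw [h2, ← integral_of_le ht.1.le]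
  have R : ∫ s in a..b, v' s * ((∫ t in a..b, u' t) - ∫ t in a..s, u' t)
      = ∫ s, (∫ t, f t s ∂μ) ∂μ := by
    rw [integral_of_le hab]
    refine setIntegral_congr_fun measurableSet_Ioc (fun s hs => ?_)
    have h1 : (fun t => f t s) = fun t => v' s * (Ici s).indicator u' t := by
      ext t
      by_cases hst : s ≤ t <;> simp [hf, indicator, hst, mul_comm]
    rw [h1, MeasureTheory.integral_const_mul, MeasureTheory.integral_indicator measurableSet_Ici, hμ,
      Measure.restrict_restrict measurableSet_Ici]
    have h2 : Ici s ∩ Ioc a b = Icc s b := by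
      ext t
      simp only [mem_inter_iff, mem_Ici, mem_Ioc, mem_Icc]
      exact ⟨fun ⟨h1', h2', h3'⟩ => ⟨h1', h3'⟩, fun ⟨h1', h2'⟩ => ⟨h1', hs.1.trans_le h1', h2'⟩⟩
    rw [h2, integral_Icc_eq_integral_Ioc, ← integral_of_le hs.2]
    have h3 := integral_add_adjacent_intervals (hiu s ⟨hs.1.le, hs.2⟩)
      (hiu2 s ⟨hs.1.le, hs.2⟩)
    congr 1
    linarith [h3]
  rw [L, R, key]

lemma parts {a b : ℝ} (hab : a ≤ b) {u' v' u v : ℝ → ℝ}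
    (hu' : IntegrableOn u' (Icc a b) volume) (hv' : IntegrableOn v' (Icc a b) volume)
    (hu : ∀ x ∈ Icc a b, u x = u a + ∫ t in a..x, u' t)
    (hv : ∀ x ∈ Icc a b, v x = v a + ∫ t in a..x, v' t) :
    u b * v b = u a * v a + ∫ t in a..b, (u' t * v t + u t * v' t) := by
  have hicc : uIcc a b = Icc a b := uIcc_of_le hab
  have hui : IntervalIntegrable u' volume a b := (hicc.symm ▸ hu').intervalIntegrable
  have hvi : IntervalIntegrable v' volume a b := (hicc.symm ▸ hv').intervalIntegrable
  have hUc : ContinuousOn (fun x => ∫ t in a..x, u' t) (Icc a b) := by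
    rw [← hicc]; exact continuousOn_primitive_interval (hicc.symm ▸ hu')
  have hVc : ContinuousOn (fun x => ∫ t in a..x, v' t) (Icc a b) := by
    rw [← hicc]; exact continuousOn_primitive_interval (hicc.symm ▸ hv')
  have huc : ContinuousOn u (Icc a b) := (continuousOn_const.add hUc).congr hu
  have hvc : ContinuousOn v (Icc a b) := (continuousOn_const.add hVc).congr hv
  have hu'v : IntervalIntegrable (fun t => u' t * v t) volume a b :=
    hui.mul_continuousOn (by rw [hicc]; exact hvc)
  have huv' : IntervalIntegrable (fun t => u t * v' t) volume a b :=
    hvi.continuousOn_mul (by rw [hicc]; exact huc)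
  have hu'V : IntervalIntegrable (fun t => u' t * ∫ s in a..t, v' s) volume a b :=
    hui.mul_continuousOn (by rw [hicc]; exact hVc)
  have hUv' : IntervalIntegrable (fun t => (∫ s in a..t, u' s) * v' t) volume a b :=
    hvi.continuousOn_mul (by rw [hicc]; exact hUc)
  have hv'U : IntervalIntegrable (fun t => v' t * ∫ s in a..t, u' s) volume a b :=
    hvi.mul_continuousOn (by rw [hicc]; exact hUc)
  have e1 : ∫ t in a..b, u' t * v t
      = (∫ t in a..b, u' t) * v a + ∫ t in a..b, u' t * ∫ s in a..t, v' s := by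
    rw [← intervalIntegral.integral_mul_const, ← integral_add (hui.mul_const _) hu'V]
    refine integral_congr fun t ht => ?_
    rw [hv t (hicc ▸ ht)]; ring
  have e2 : ∫ t in a..b, u t * v' t
      = u a * (∫ t in a..b, v' t) + ∫ t in a..b, (∫ s in a..t, u' s) * v' t := by
    rw [← intervalIntegral.integral_const_mul, ← integral_add (hvi.const_mul _) hUv']
    refine integral_congr fun t ht => ?_
    rw [hu t (hicc ▸ ht)]; ring
  have e3 := swap_core hab hu' hv'
  have e4 : ∫ s in a..b, v' s * ((∫ t in a..b, u' t) - ∫ t in a..s, u' t)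
      = (∫ s in a..b, v' s) * (∫ t in a..b, u' t)
        - ∫ s in a..b, v' s * ∫ t in a..s, u' t := by
    rw [← intervalIntegral.integral_mul_const, ← intervalIntegral.integral_sub (hvi.mul_const _) hv'U]
    exact integral_congr fun s hs => by ring
  have e5 : ∫ t in a..b, (∫ s in a..t, u' s) * v' t
      = ∫ t in a..b, v' t * ∫ s in a..t, u' s :=
    integral_congr fun t ht => mul_comm _ _
  have hub := hu b ⟨hab, le_rfl⟩
  have hvb := hv b ⟨hab, le_rfl⟩
  rw [integral_add hu'v huv', e1, e2, e3, e4, e5, hub, hvb]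
  ring

lemma prodrep {a b : ℝ} (hab : a ≤ b) {u' v' u v : ℝ → ℝ}
    (hu' : IntegrableOn u' (Icc a b) volume) (hv' : IntegrableOn v' (Icc a b) volume)
    (hu : ∀ x ∈ Icc a b, u x = u a + ∫ t in a..x, u' t)
    (hv : ∀ x ∈ Icc a b, v x = v a + ∫ t in a..x, v' t) :
    ∀ x ∈ Icc a b, u x * v x = u a * v a + ∫ t in a..x, (u' t * v t + u t * v' t) :=
  fun x hx => parts hx.1 (hu'.mono_set (Icc_subset_Icc le_rfl hx.2))
    (hv'.mono_set (Icc_subset_Icc le_rfl hx.2))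
    (fun y hy => hu y (Icc_subset_Icc le_rfl hx.2 hy))
    (fun y hy => hv y (Icc_subset_Icc le_rfl hx.2 hy))

/-- If `m, h : [x₀,x₁] → [0,∞)` are absolutely continuous, `h` nondecreasing with
`h(x₁) − h(x₀) ≤ D(x₁ − x₀)`, and `m'(x) ≥ −((K + h'(x))/(x + h(x)))·m(x)` a.e. on
`(x₀,x₁)`, then `m(x₁) ≥ (x₀/x₁)^{max{1 + D/K, K + D}} m(x₀)`. -/
theorem statement11 (K D x0 x1 : ℝ) (hK : 0 < K) (hD : 0 < D)
    (h0 : 0 < x0) (h01 : x0 ≤ x1)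
    (m h m' h' : ℝ → ℝ)
    (hm'int : IntegrableOn m' (Set.Icc x0 x1) volume)
    (hh'int : IntegrableOn h' (Set.Icc x0 x1) volume)
    (hm : ∀ x ∈ Set.Icc x0 x1, m x = m x0 + ∫ t in x0..x, m' t)
    (hh : ∀ x ∈ Set.Icc x0 x1, h x = h x0 + ∫ t in x0..x, h' t)
    (hmnonneg : ∀ x ∈ Set.Icc x0 x1, 0 ≤ m x)
    (hhnonneg : ∀ x ∈ Set.Icc x0 x1, 0 ≤ h x)
    (hhmono : MonotoneOn h (Set.Icc x0 x1))
    (hhD : h x1 - h x0 ≤ D * (x1 - x0))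
    (hineq : ∀ᵐ x ∂volume, x ∈ Set.Ioo x0 x1 →
      -((K + h' x) / (x + h x)) * m x ≤ m' x) :
    (x0 / x1) ^ max (1 + D / K) (K + D) * m x0 ≤ m x1 := by
  have hx1 : 0 < x1 := lt_of_lt_of_le h0 h01
  set α := max (K - 1) 0 with hα
  set p := max (1 + D / K) (K + D) with hpdef
  have hα0 : 0 ≤ α := le_max_right _ _
  have hαK : K - 1 ≤ α := le_max_left _ _
  have hαp : α + (1 + D) ≤ p := by
    rcases le_total K 1 with hk | hk
    · have h1 : α = 0 := max_eq_right (by linarith)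
      have h2 : D ≤ D / K := by
        rw [le_div_iff₀ hK]; nlinarith
      have h3 := le_max_left (1 + D / K) (K + D)
      rw [h1]; rw [hpdef]; linarith
    · have h1 : α = K - 1 := max_eq_left (by linarith)
      have h3 := le_max_right (1 + D / K) (K + D)
      rw [h1, hpdef]; linarith
  have hIcc : uIcc x0 x1 = Icc x0 x1 := uIcc_of_le h01
  -- the function w = id + h and its derivative w' = 1 + h'
  have hw'int : IntegrableOn (fun t => 1 + h' t) (Icc x0 x1) volume := by
    have h1 : IntegrableOn (fun _ : ℝ => (1:ℝ)) (Icc x0 x1) volume :=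
      integrableOn_const measure_Icc_lt_top.ne
    exact h1.add hh'int
  have hwrep : ∀ x ∈ Icc x0 x1, (fun t => t + h t) x
      = (fun t => t + h t) x0 + ∫ t in x0..x, (1 + h' t) := by
    intro x hx
    have hsub : uIcc x0 x ⊆ Icc x0 x1 := by
      rw [uIcc_of_le hx.1]; exact Icc_subset_Icc le_rfl hx.2
    have hhi : IntervalIntegrable h' volume x0 x :=
      (hh'int.mono_set hsub).intervalIntegrable
    have h1 : ∫ t in x0..x, (1 + h' t) = (x - x0) + ∫ t in x0..x, h' t := by
      rw [integral_add intervalIntegrable_const hhi]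
      simp
    simp only [h1]
    rw [hh x hx]
    ring
  have hmc : ContinuousOn m (Icc x0 x1) := by
    refine (continuousOn_const.add ?_).congr hm
    rw [← hIcc]; exact continuousOn_primitive_interval (hIcc.symm ▸ hm'int)
  have hhc : ContinuousOn h (Icc x0 x1) := by
    refine (continuousOn_const.add ?_).congr hh
    rw [← hIcc]; exact continuousOn_primitive_interval (hIcc.symm ▸ hh'int)
  have hwc : ContinuousOn (fun t => t + h t) (Icc x0 x1) := continuousOn_id.add hhc
  have hqint : IntegrableOn (fun t => m' t * (t + h t) + m t * (1 + h' t))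
      (Icc x0 x1) volume :=
    (hm'int.mul_continuousOn hwc isCompact_Icc).add
      (IntegrableOn.continuousOn_mul hmc hw'int isCompact_Icc)
  have hP1rep := prodrep h01 hm'int hw'int hm hwrep
  -- the function g = x ^ α with derivative g' = α * x ^ (α - 1)
  have hg'c : ContinuousOn (fun t : ℝ => α * t ^ (α - 1)) (Icc x0 x1) := by
    apply continuousOn_const.mul
    apply ContinuousOn.rpow_const continuousOn_id
    intro t ht
    exact Or.inl (ne_of_gt (lt_of_lt_of_le h0 ht.1))
  have hg'int : IntegrableOn (fun t : ℝ => α * t ^ (α - 1)) (Icc x0 x1) volume :=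
    hg'c.integrableOn_Icc
  have hgrep : ∀ x ∈ Icc x0 x1, (fun t : ℝ => t ^ α) x
      = (fun t : ℝ => t ^ α) x0 + ∫ t in x0..x, α * t ^ (α - 1) := by
    intro x hx
    have h1 : ∫ t in x0..x, α * t ^ (α - 1) = x ^ α - x0 ^ α := by
      apply integral_eq_sub_of_hasDerivAt
      · intro t ht
        rw [uIcc_of_le hx.1] at ht
        exact Real.hasDerivAt_rpow_const (Or.inl (ne_of_gt (lt_of_lt_of_le h0 ht.1)))
      · have hsub : uIcc x0 x ⊆ Icc x0 x1 := by
          rw [uIcc_of_le hx.1]; exact Icc_subset_Icc le_rfl hx.2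
        exact (hg'int.mono_set hsub).intervalIntegrable
    simp only [h1]
    ring
  have hPrep := prodrep h01 (u := fun t => m t * (t + h t)) (v := fun t : ℝ => t ^ α)
    hqint hg'int hP1rep hgrep x1 ⟨h01, le_rfl⟩
  -- nonnegativity of the integrand
  have hQ0 : 0 ≤ ∫ t in x0..x1,
      ((m' t * (t + h t) + m t * (1 + h' t)) * t ^ α
        + (m t * (t + h t)) * (α * t ^ (α - 1))) := by
    rw [integral_of_le h01, MeasureTheory.integral_Ioc_eq_integral_Ioo]
    apply setIntegral_nonneg_ae measurableSet_Ioo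
    filter_upwards [hineq] with x hx hmem
    have hxI : x ∈ Icc x0 x1 := ⟨hmem.1.le, hmem.2.le⟩
    have hxpos : 0 < x := lt_of_lt_of_le h0 hxI.1
    have hhx : 0 ≤ h x := hhnonneg x hxI
    have hmx : 0 ≤ m x := hmnonneg x hxI
    have hwx : 0 < x + h x := by linarith
    have hle := hx hmem
    have h1 : -((K + h' x) * m x) ≤ m' x * (x + h x) := by
      have h2 := mul_le_mul_of_nonneg_right hle hwx.le
      have h3 : -((K + h' x) / (x + h x)) * m x * (x + h x) = -((K + h' x) * m x) := by
        field_simp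
      linarith [h2, h3.ge, h3.le]
    have hB : 0 < x ^ (α - 1) := Real.rpow_pos_of_pos hxpos _
    have hBA : x ^ (α - 1) * x = x ^ α := by
      rw [Real.rpow_sub hxpos, Real.rpow_one]
      field_simp
    have hkey : 0 ≤ x ^ (α - 1) * (m x * ((1 - K + α) * x + α * h x)) := by
      apply mul_nonneg hB.le
      apply mul_nonneg hmx
      nlinarith [mul_nonneg (by linarith : (0:ℝ) ≤ 1 - K + α) hxpos.le,
        mul_nonneg hα0 hhx]
    rw [← hBA]
    nlinarith [mul_le_mul_of_nonneg_right h1 (mul_nonneg hB.le hxpos.le), hkey]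
  -- final algebra
  set r := x1 / x0 with hrdef
  have hr1 : 1 ≤ r := (one_le_div h0).2 h01
  have hr0 : 0 < r := lt_of_lt_of_le one_pos hr1
  have hw0 : 0 < x0 + h x0 := by have := hhnonneg x0 ⟨le_rfl, h01⟩; linarith
  have hw1 : 0 < x1 + h x1 := by have := hhnonneg x1 ⟨h01, le_rfl⟩; linarith
  have hBern : 1 + (1 + D) * (r - 1) ≤ r ^ (1 + D) := by
    have h1 := one_add_mul_self_le_rpow_one_add
      (by linarith : (-1:ℝ) ≤ r - 1) (by linarith : (1:ℝ) ≤ 1 + D)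
    have h2 : 1 + (r - 1) = r := by ring
    rwa [h2] at h1
  have hrx : x1 = r * x0 := by rw [hrdef]; field_simp
  have hw1b : x1 + h x1 ≤ r ^ (1 + D) * (x0 + h x0) := by
    have h2 : (1 + (1 + D) * (r - 1)) * (x0 + h x0) ≤ r ^ (1 + D) * (x0 + h x0) :=
      mul_le_mul_of_nonneg_right hBern hw0.le
    have h4 : (r - 1) * x0 = x1 - x0 := by rw [hrdef]; field_simp
    have h5 : 0 ≤ (r - 1) * h x0 := mul_nonneg (by linarith) (hhnonneg x0 ⟨le_rfl, h01⟩)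
    nlinarith [hhD, hD.le]
  have hcoef : (x0 / x1) ^ p * ((x1 + h x1) * x1 ^ α) ≤ (x0 + h x0) * x0 ^ α := by
    have hx1α : x1 ^ α = r ^ α * x0 ^ α := by
      rw [hrx, Real.mul_rpow hr0.le h0.le]
    have hinv : (x0 / x1) ^ p = (r ^ p)⁻¹ := by
      rw [show x0 / x1 = r⁻¹ by rw [hrdef, inv_div], Real.inv_rpow hr0.le]
    have hrp : 0 < r ^ p := Real.rpow_pos_of_pos hr0 p
    rw [hinv, hx1α, inv_mul_le_iff₀ hrp]
    have h6 : r ^ (1 + D) * r ^ α ≤ r ^ p := by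
      rw [← Real.rpow_add hr0]
      exact Real.rpow_le_rpow_of_exponent_le hr1 (by linarith)
    calc (x1 + h x1) * (r ^ α * x0 ^ α)
        ≤ (r ^ (1 + D) * (x0 + h x0)) * (r ^ α * x0 ^ α) := by
          apply mul_le_mul_of_nonneg_right hw1b
          positivity
      _ = (r ^ (1 + D) * r ^ α) * ((x0 + h x0) * x0 ^ α) := by ring
      _ ≤ r ^ p * ((x0 + h x0) * x0 ^ α) := by
          apply mul_le_mul_of_nonneg_right h6
          positivity
  have hmono : (m x0 * (x0 + h x0)) * x0 ^ α ≤ (m x1 * (x1 + h x1)) * x1 ^ α := by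
    linarith [hPrep, hQ0]
  have hm0 : 0 ≤ m x0 := hmnonneg x0 ⟨le_rfl, h01⟩
  have hpos : 0 < (x1 + h x1) * x1 ^ α := mul_pos hw1 (Real.rpow_pos_of_pos hx1 α)
  have final : ((x0 / x1) ^ p * m x0) * ((x1 + h x1) * x1 ^ α)
      ≤ m x1 * ((x1 + h x1) * x1 ^ α) := by
    calc ((x0 / x1) ^ p * m x0) * ((x1 + h x1) * x1 ^ α)
        = m x0 * ((x0 / x1) ^ p * ((x1 + h x1) * x1 ^ α)) := by ring
      _ ≤ m x0 * ((x0 + h x0) * x0 ^ α) := mul_le_mul_of_nonneg_left hcoef hm0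
      _ = (m x0 * (x0 + h x0)) * x0 ^ α := by ring
      _ ≤ (m x1 * (x1 + h x1)) * x1 ^ α := hmono
      _ = m x1 * ((x1 + h x1) * x1 ^ α) := by ring
  exact le_of_mul_le_mul_right final hpos
end

section
/- For any nonempty compact set Z ⊂ ℝ there exist N ∈ ℕ and points u_1, …, u_N ∈ Z with u_1 = inf Z and u_N = sup Z such that u_k < u_{k+1} for all 1 ≤ k ≤ N−1, u_k + 1 < u_{k+2} for all 1 ≤ k ≤ N−2, and for each k = 1, …, N−1 either u_{k+1} < u_k + 3 or (u_k, u_{k+1}) ∩ Z = ∅. -/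
open Set

/-- For any nonempty compact `Z ⊆ ℝ` there are points `u 0 < u 1 < … < u N` in `Z` with
`u 0 = inf Z`, `u N = sup Z`, `u k + 1 < u (k+2)`, and for each `k < N` either
`u (k+1) < u k + 3` or `(u k, u (k+1)) ∩ Z = ∅`. -/
theorem statement16 (Z : Set ℝ) (hZ : IsCompact Z) (hne : Z.Nonempty) :
    ∃ (N : ℕ) (u : ℕ → ℝ),
      (∀ k ≤ N, u k ∈ Z) ∧
      u 0 = sInf Z ∧ u N = sSup Z ∧
      (∀ k, k + 1 ≤ N → u k < u (k + 1)) ∧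
      (∀ k, k + 2 ≤ N → u k + 1 < u (k + 2)) ∧
      (∀ k, k + 1 ≤ N → (u (k + 1) < u k + 3 ∨ Set.Ioo (u k) (u (k + 1)) ∩ Z = ∅)) := by
  classical
  have hbdd : BddAbove Z := hZ.bddAbove
  have hsup : sSup Z ∈ Z := hZ.sSup_mem hne
  have hinf : sInf Z ∈ Z := hZ.sInf_mem hne
  set f : ℝ → ℝ := fun x =>
    if (Z ∩ Set.Ioc x (x + 2)).Nonempty then sSup (Z ∩ Set.Icc x (x + 2))
    else sInf (Z ∩ Set.Ici (x + 2)) with hf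
  -- key properties of one greedy step
  have key : ∀ x ∈ Z, x < sSup Z →
      f x ∈ Z ∧ x < f x ∧
      (f x ≤ x + 2 ∨ (x + 2 < f x ∧ Set.Ioo x (f x) ∩ Z = ∅)) ∧
      (∀ z ∈ Z, f x < z → x + 2 < z) := by
    intro x hx hxlt
    by_cases h : (Z ∩ Set.Ioc x (x + 2)).Nonempty
    · have hfx : f x = sSup (Z ∩ Set.Icc x (x + 2)) := by simp [hf, h]
      have hScomp : IsCompact (Z ∩ Set.Icc x (x + 2)) := hZ.inter_right isClosed_Icc
      obtain ⟨z, hzZ, hzI⟩ := h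
      have hSne : (Z ∩ Set.Icc x (x + 2)).Nonempty :=
        ⟨z, hzZ, ⟨le_of_lt hzI.1, hzI.2⟩⟩
      have hmem : sSup (Z ∩ Set.Icc x (x + 2)) ∈ Z ∩ Set.Icc x (x + 2) :=
        hScomp.sSup_mem hSne
      have hble : z ≤ sSup (Z ∩ Set.Icc x (x + 2)) :=
        le_csSup hScomp.bddAbove ⟨hzZ, ⟨le_of_lt hzI.1, hzI.2⟩⟩
      refine ⟨hfx ▸ hmem.1, by rw [hfx]; exact lt_of_lt_of_le hzI.1 hble, ?_, ?_⟩
      · left; rw [hfx]; exact hmem.2.2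
      · intro w hwZ hwgt
        by_contra hcon
        push_neg at hcon
        have hwx : x < w := lt_trans (lt_of_lt_of_le hzI.1 (hfx ▸ hble)) hwgt
        have : w ≤ sSup (Z ∩ Set.Icc x (x + 2)) :=
          le_csSup hScomp.bddAbove ⟨hwZ, ⟨le_of_lt hwx, hcon⟩⟩
        rw [hfx] at hwgt; linarith
    · have hfx : f x = sInf (Z ∩ Set.Ici (x + 2)) := by simp [hf, h]
      have habove : ∀ z ∈ Z, x < z → x + 2 < z := by
        intro z hzZ hzx
        by_contra hcon
        push_neg at hcon
        exact h ⟨z, hzZ, ⟨hzx, hcon⟩⟩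
      have hSne : (Z ∩ Set.Ici (x + 2)).Nonempty :=
        ⟨sSup Z, hsup, le_of_lt (habove _ hsup hxlt)⟩
      have hScomp : IsCompact (Z ∩ Set.Ici (x + 2)) := hZ.inter_right isClosed_Ici
      have hmem : sInf (Z ∩ Set.Ici (x + 2)) ∈ Z ∩ Set.Ici (x + 2) :=
        hScomp.sInf_mem hSne
      have h22 : x + 2 ≤ sInf (Z ∩ Set.Ici (x + 2)) := hmem.2
      have hgt : x + 2 < f x := by
        rw [hfx]
        exact habove _ hmem.1 (by linarith)
      refine ⟨hfx ▸ hmem.1, by linarith, Or.inr ⟨hgt, ?_⟩, fun z _ hz => lt_trans hgt hz⟩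
      ext w
      simp only [Set.mem_inter_iff, Set.mem_Ioo, Set.mem_empty_iff_false, iff_false]
      rintro ⟨⟨hw1, hw2⟩, hwZ⟩
      have h2 : x + 2 < w := habove w hwZ hw1
      have : sInf (Z ∩ Set.Ici (x + 2)) ≤ w :=
        csInf_le hScomp.bddBelow ⟨hwZ, le_of_lt h2⟩
      rw [hfx] at hw2; linarith
  -- the sequence
  set u : ℕ → ℝ := fun n =>
    Nat.rec (sInf Z) (fun _ x => if x = sSup Z then x else f x) n with hu
  have hu0 : u 0 = sInf Z := rfl
  have husucc : ∀ n, u (n + 1) = if u n = sSup Z then u n else f (u n) := fun n => rfl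
  have hmemu : ∀ n, u n ∈ Z := by
    intro n
    induction n with
    | zero => exact hinf
    | succ n ih =>
      rw [husucc]
      split
      · exact ih
      · next hne' =>
        exact (key (u n) ih (lt_of_le_of_ne (le_csSup hbdd ih) hne')).1
  -- termination
  have hterm : ∃ n, u n = sSup Z := by
    by_contra hcon
    push_neg at hcon
    have hlt : ∀ n, u n < sSup Z :=
      fun n => lt_of_le_of_ne (le_csSup hbdd (hmemu n)) (hcon n)
    have hstep : ∀ n, u (n + 1) = f (u n) := fun n => by
      rw [husucc, if_neg (hcon n)]
    have h2 : ∀ n, u n + 2 < u (n + 2) := by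
      intro n
      have k1 := key (u n) (hmemu n) (hlt n)
      have k2 := key (u (n + 1)) (hmemu (n + 1)) (hlt (n + 1))
      have e1 : u (n + 1) = f (u n) := hstep n
      have e2 : u (n + 2) = f (u (n + 1)) := hstep (n + 1)
      have hgt : f (u n) < u (n + 2) := by rw [e2, ← e1]; exact k2.2.1
      exact k1.2.2.2 _ (hmemu (n + 2)) hgt
    have hgrow : ∀ n : ℕ, sInf Z + 2 * n ≤ u (2 * n) := by
      intro n
      induction n with
      | zero => simp [hu0]
      | succ n ih =>
        have := h2 (2 * n)
        have heq : 2 * (n + 1) = 2 * n + 2 := by ring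
        rw [heq]
        push_cast
        linarith
    obtain ⟨n, hn⟩ := exists_nat_gt (sSup Z - sInf Z)
    have h1 := hgrow n
    have h3 := hlt (2 * n)
    have : (n : ℝ) ≤ 2 * n := by
      have : (0 : ℝ) ≤ n := Nat.cast_nonneg n
      linarith
    linarith
  set N := Nat.find hterm with hN
  have hNspec : u N = sSup Z := Nat.find_spec hterm
  have hNmin : ∀ k, k < N → u k ≠ sSup Z := fun k hk => Nat.find_min hterm hk
  have hltN : ∀ k, k < N → u k < sSup Z :=
    fun k hk => lt_of_le_of_ne (le_csSup hbdd (hmemu k)) (hNmin k hk)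
  have hstepN : ∀ k, k < N → u (k + 1) = f (u k) := fun k hk => by
    rw [husucc, if_neg (hNmin k hk)]
  refine ⟨N, u, fun k _ => hmemu k, hu0, hNspec, ?_, ?_, ?_⟩
  · intro k hk
    have hk' : k < N := hk
    rw [hstepN k hk']
    exact (key (u k) (hmemu k) (hltN k hk')).2.1
  · intro k hk
    have hk1 : k < N := by omega
    have hk2 : k + 1 < N := by omega
    have k1 := key (u k) (hmemu k) (hltN k hk1)
    have k2 := key (u (k + 1)) (hmemu (k + 1)) (hltN (k + 1) hk2)
    have e1 : u (k + 1) = f (u k) := hstepN k hk1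
    have e2 : u (k + 2) = f (u (k + 1)) := hstepN (k + 1) hk2
    have hgt : f (u k) < u (k + 2) := by rw [e2, ← e1]; exact k2.2.1
    have := k1.2.2.2 _ (hmemu (k + 2)) hgt
    linarith
  · intro k hk
    have hk' : k < N := hk
    have k1 := key (u k) (hmemu k) (hltN k hk')
    rw [hstepN k hk']
    rcases k1.2.2.1 with h | h
    · left; linarith
    · right; exact h.2
end
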